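/- arXiv:1406.4420 — 5 statements merged into one kernel-verified Lean document; each statement's English description precedes it below -/
import Mathlib

section
/- Let V and S be finite sets with |V| = n even. Let f : V → S be a coloring. Let μ be the color distribution induced by f and let ν be a probability distribution on S × S. Let M_f be the set of perfect matchings on V such that the pair of colors on the two endpoints of a uniformly random directed edge of the matching has distribution ν. If M_f is nonempty, then |M_f| = PM(n) · H(ν, n/2) / H(μ, n), where PM(n) is the number of perfect matchings on an n-element set, H(μ, n) is the number of S-colorings of an n-element set with color distribution μ, and H(ν, n/2) is the number of ways to assign ordered pairs of colors to n/2 edges realizing edge-color distribution ν with vertex marginals consistent. -/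
open Finset

lemma marginal {V S : Type} [Fintype V] [DecidableEq V] [Fintype S] [DecidableEq S] (σ : V → V) (g : V → S) (ν : S × S → ℚ)
    (h : ∀ p : S × S, ((univ.filter (fun v => (g v, g (σ v)) = p)).card : ℚ)
      = (Fintype.card V : ℚ) * ν p) (s : S) :
    ((univ.filter (fun v => g v = s)).card : ℚ) = (Fintype.card V : ℚ) * ∑ t, ν (s, t) := by
  rw [Finset.card_eq_sum_card_fiberwise (f := fun v => g (σ v)) (t := univ) (fun x _ => mem_univ _)]
  push_cast
  rw [Finset.mul_sum]
  refine Finset.sum_congr rfl fun t _ => ?_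
  rw [← h (s, t)]
  congr 2
  ext v
  simp [Prod.ext_iff, and_comm]

lemma exists_perm {V S : Type} [Fintype V] [DecidableEq V] [Fintype S] [DecidableEq S] (f g : V → S)
    (h : ∀ s, (univ.filter (fun v => g v = s)).card = (univ.filter (fun v => f v = s)).card) :
    ∃ π : Equiv.Perm V, ∀ v, f (π v) = g v := by
  have hc : ∀ s, Fintype.card {v // g v = s} = Fintype.card {v // f v = s} := by
    intro s; rw [Fintype.card_subtype, Fintype.card_subtype, h s]
  refine ⟨(Equiv.sigmaFiberEquiv g).symm.trans ((Equiv.sigmaCongrRight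
    (fun s => Fintype.equivOfCardEq (hc s))).trans (Equiv.sigmaFiberEquiv f)), fun v => ?_⟩
  exact (Fintype.equivOfCardEq (hc (g v)) ⟨v, rfl⟩).2

lemma fiber_card {V S : Type} [Fintype V] [DecidableEq V] [Fintype S] [DecidableEq S] (σ : Equiv.Perm V)
    (h2 : ∀ v, σ (σ v) = v) (hfp : ∀ v, σ v ≠ v) (ν : S × S → ℚ) :
    Fintype.card {g : V → S // ∀ p : S × S,
        ((univ.filter (fun v => (g v, g (σ v)) = p)).card : ℚ) = (Fintype.card V : ℚ) * ν p}
    = Fintype.card {e : Fin (Fintype.card V / 2) → S × S // ∀ p : S × S,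
        (((univ.filter (fun j => e j = p)).card
          + (univ.filter (fun j => e j = Prod.swap p)).card : ℕ) : ℚ)
        = (Fintype.card V : ℚ) * ν p} := by
  set n := Fintype.card V with hn
  let e0 : V ≃ Fin n := Fintype.equivFin V
  set T : Finset V := univ.filter (fun v => e0 v < e0 (σ v)) with hT
  have hA : ∀ v, v ∈ T ↔ σ v ∉ T := by
    intro v
    have hne : e0 v ≠ e0 (σ v) := fun h => hfp v (e0.injective h.symm)
    simp only [hT, mem_filter, mem_univ, true_and, h2 v]
    constructor
    · intro h h'; exact absurd (lt_trans h h') (lt_irrefl _)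
    · intro h; rcases lt_or_gt_of_ne hne with h' | h'
      · exact h'
      · exact absurd h' h
  have hσT : ∀ v, v ∉ T → σ v ∈ T := by
    intro v hv
    have := hA (σ v); rw [h2 v] at this
    by_contra h'
    exact (not_iff_not.2 this).1 h' hv
  have hBcard : 2 * T.card = n := by
    set T' : Finset V := univ.filter (fun v => v ∉ T) with hT'
    have hsplit : T.card + T'.card = n := by
      have := Finset.card_filter_add_card_filter_not (s := (univ : Finset V))
        (p := fun v => v ∈ T)
      rw [card_univ, Finset.filter_univ_mem] at this
      exact this
    have hbij : T.card = T'.card := by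
      apply Finset.card_bij' (fun v _ => σ v) (fun v _ => σ v)
      · intro a ha
        rw [hT', mem_filter]
        exact ⟨mem_univ _, (hA a).1 ha⟩
      · intro a ha
        rw [hT', mem_filter] at ha
        exact hσT a ha.2
      · intro a _; exact h2 a
      · intro a _; exact h2 a
    omega
  have hTcard : Fintype.card ↥T = n / 2 := by rw [Fintype.card_coe]; omega
  let κ : Fin (n / 2) ≃ ↥T := (Fintype.equivFinOfCardEq hTcard).symm
  have hκT : ∀ j, (κ j : V) ∈ T := fun j => (κ j).2
  have hσκ : ∀ j, σ (κ j : V) ∉ T := fun j => (hA _).1 (hκT j)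
  have hcoe : ∀ (j : Fin (n/2)) (h : (κ j : V) ∈ T), κ.symm ⟨(κ j : V), h⟩ = j := by
    intro j h
    rw [show (⟨(κ j : V), h⟩ : ↥T) = κ j from Subtype.ext rfl, κ.symm_apply_apply]
  -- bijection for the T part
  have b1 : ∀ (g : V → S) (p : S × S),
      (univ.filter (fun v => (g v, g (σ v)) = p ∧ v ∈ T)).card
      = (univ.filter (fun j : Fin (n/2) => (g (κ j : V), g (σ (κ j : V))) = p)).card := by
    intro g p
    apply Finset.card_bij' (fun v hv => κ.symm ⟨v, (Finset.mem_filter.1 hv).2.2⟩)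
      (fun j _ => (κ j : V))
    case hi =>
      intro v hv
      rw [mem_filter] at hv ⊢
      refine ⟨mem_univ _, ?_⟩
      rw [κ.apply_symm_apply]
      exact hv.2.1
    case hj =>
      intro j hj
      rw [mem_filter] at hj ⊢
      exact ⟨mem_univ _, hj.2, hκT j⟩
    case left_inv =>
      intro v hv
      exact congrArg Subtype.val (κ.apply_symm_apply _)
    case right_inv =>
      intro j hj
      rw [Equiv.symm_apply_eq]
  -- bijection for the complement part
  have b2 : ∀ (g : V → S) (p : S × S),
      (univ.filter (fun v => (g v, g (σ v)) = p ∧ v ∉ T)).card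
      = (univ.filter (fun j : Fin (n/2) => (g (κ j : V), g (σ (κ j : V))) = Prod.swap p)).card := by
    intro g p
    apply Finset.card_bij' (fun v hv => κ.symm ⟨σ v, hσT v (Finset.mem_filter.1 hv).2.2⟩)
      (fun j _ => σ (κ j : V))
    case hi =>
      intro v hv
      rw [mem_filter] at hv ⊢
      refine ⟨mem_univ _, ?_⟩
      rw [κ.apply_symm_apply]
      simp only [h2 v]
      rw [← hv.2.1, Prod.swap_prod_mk]
    case hj =>
      intro j hj
      rw [mem_filter] at hj ⊢
      refine ⟨mem_univ _, ?_, hσκ j⟩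
      rw [h2]
      have h5 := congrArg Prod.swap hj.2
      rw [Prod.swap_swap, Prod.swap_prod_mk] at h5
      exact h5
    case left_inv =>
      intro v hv
      have h3 : ((κ (κ.symm ⟨σ v, hσT v (Finset.mem_filter.1 hv).2.2⟩) : ↥T) : V) = σ v :=
        congrArg Subtype.val (κ.apply_symm_apply _)
      rw [h3]
      exact h2 v
    case right_inv =>
      intro j hj
      rw [Equiv.symm_apply_eq]
      exact Subtype.ext (h2 _)
  -- the key counting identity
  have key : ∀ (g : V → S) (p : S × S),
      (univ.filter (fun v => (g v, g (σ v)) = p)).card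
      = (univ.filter (fun j : Fin (n/2) => (g (κ j : V), g (σ (κ j : V))) = p)).card
        + (univ.filter (fun j : Fin (n/2) => (g (κ j : V), g (σ (κ j : V))) = Prod.swap p)).card := by
    intro g p
    rw [← b1 g p, ← b2 g p, ← Finset.filter_filter, ← Finset.filter_filter,
      Finset.card_filter_add_card_filter_not]
  -- the reconstruction map
  let Ψ : (Fin (n/2) → S × S) → V → S := fun e v =>
    if h : v ∈ T then (e (κ.symm ⟨v, h⟩)).1 else (e (κ.symm ⟨σ v, hσT v h⟩)).2
  have hE : ∀ (e : Fin (n/2) → S × S) (j), (Ψ e (κ j : V), Ψ e (σ (κ j : V))) = e j := by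
    intro e j
    have h1 : Ψ e (κ j : V) = (e j).1 := by
      show (if h : (κ j : V) ∈ T then (e (κ.symm ⟨(κ j : V), h⟩)).1
        else (e (κ.symm ⟨σ (κ j : V), hσT _ h⟩)).2) = (e j).1
      rw [dif_pos (hκT j), hcoe j]
    have hh : Ψ e (σ (κ j : V)) = (e j).2 := by
      show (if h : σ (κ j : V) ∈ T then (e (κ.symm ⟨σ (κ j : V), h⟩)).1
        else (e (κ.symm ⟨σ (σ (κ j : V)), hσT _ h⟩)).2) = (e j).2
      rw [dif_neg (hσκ j)]
      have : (⟨σ (σ (κ j : V)), hσT _ (hσκ j)⟩ : ↥T) = κ j := Subtype.ext (h2 _)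
      rw [this, κ.symm_apply_apply]
    rw [Prod.ext_iff]; exact ⟨h1, hh⟩
  have hΨΦ : ∀ g : V → S, Ψ (fun j => (g (κ j : V), g (σ (κ j : V)))) = g := by
    intro g
    funext v
    show (if h : v ∈ T then _ else _) = g v
    by_cases h : v ∈ T
    · rw [dif_pos h]
      simp only [κ.apply_symm_apply]
    · rw [dif_neg h]
      simp only [κ.apply_symm_apply, h2 v]
  apply Fintype.card_congr
  refine
    { toFun := fun g => ⟨fun j => (g.1 (κ j : V), g.1 (σ (κ j : V))), ?_⟩
      invFun := fun e => ⟨Ψ e.1, ?_⟩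
      left_inv := fun g => Subtype.ext (hΨΦ g.1)
      right_inv := fun e => Subtype.ext (funext fun j => hE e.1 j) }
  · intro p
    rw [← g.2 p]
    exact_mod_cast (key g.1 p).symm
  · intro p
    rw [key (Ψ e.1) p]
    have hf1 : univ.filter (fun j => (Ψ e.1 (κ j : V), Ψ e.1 (σ (κ j : V))) = p)
        = univ.filter (fun j => e.1 j = p) :=
      Finset.filter_congr (fun j _ => by rw [hE e.1 j])
    have hf2 : univ.filter (fun j => (Ψ e.1 (κ j : V), Ψ e.1 (σ (κ j : V))) = Prod.swap p)
        = univ.filter (fun j => e.1 j = Prod.swap p) :=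
      Finset.filter_congr (fun j _ => by rw [hE e.1 j])
    rw [hf1, hf2]
    exact_mod_cast e.2 p

lemma conj_aux {V S : Type} [Fintype V] [DecidableEq V] [Fintype S] [DecidableEq S] (f g : V → S) (ν : S × S → ℚ)
    (π : Equiv.Perm V) (hπ : ∀ v, f (π v) = g v) (σ : Equiv.Perm V)
    (h : (∀ v, σ (σ v) = v) ∧ (∀ v, σ v ≠ v) ∧
      ∀ p : S × S, ((univ.filter (fun v => (g v, g (σ v)) = p)).card : ℚ)
        = (Fintype.card V : ℚ) * ν p) :
    (∀ v, (π * σ * π⁻¹) ((π * σ * π⁻¹) v) = v) ∧ (∀ v, (π * σ * π⁻¹) v ≠ v) ∧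
      ∀ p : S × S, ((univ.filter (fun v => (f v, f ((π * σ * π⁻¹) v)) = p)).card : ℚ)
        = (Fintype.card V : ℚ) * ν p := by
  obtain ⟨h1, h2, h3⟩ := h
  have happ : ∀ v, (π * σ * π⁻¹) v = π (σ (π.symm v)) := fun v => rfl
  refine ⟨?_, ?_, ?_⟩
  · intro v
    simp only [happ, Equiv.symm_apply_apply, h1, Equiv.apply_symm_apply]
  · intro v hv
    rw [happ] at hv
    have : σ (π.symm v) = π.symm v := by
      have := congrArg π.symm hv
      rwa [Equiv.symm_apply_apply] at this
    exact h2 _ this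
  · intro p
    rw [← h3 p]
    norm_cast
    apply Finset.card_bij' (fun v _ => π.symm v) (fun v _ => π v)
    case hi =>
      intro v hv
      rw [mem_filter] at hv ⊢
      refine ⟨mem_univ _, ?_⟩
      have e1 : g (π.symm v) = f v :=
        (hπ (π.symm v)).symm.trans (congrArg f (π.apply_symm_apply v))
      have e2 : g (σ (π.symm v)) = f ((π * σ * π⁻¹) v) := (hπ (σ (π.symm v))).symm
      rw [e1, e2]
      exact hv.2
    case hj =>
      intro w hw
      rw [mem_filter] at hw ⊢
      refine ⟨mem_univ _, ?_⟩
      have e3 : (π * σ * π⁻¹) (π w) = π (σ w) := by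
        rw [happ, Equiv.symm_apply_apply]
      rw [hπ, e3, hπ]
      exact hw.2
    case left_inv =>
      intro v _
      exact π.apply_symm_apply v
    case right_inv =>
      intro w _
      exact π.symm_apply_apply w

lemma conj_card {V S : Type} [Fintype V] [DecidableEq V] [Fintype S] [DecidableEq S] (f g : V → S) (ν : S × S → ℚ)
    (π : Equiv.Perm V) (hπ : ∀ v, f (π v) = g v) :
    Fintype.card {σ : Equiv.Perm V // (∀ v, σ (σ v) = v) ∧ (∀ v, σ v ≠ v) ∧
      ∀ p : S × S, ((univ.filter (fun v => (g v, g (σ v)) = p)).card : ℚ)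
        = (Fintype.card V : ℚ) * ν p}
    = Fintype.card {σ : Equiv.Perm V // (∀ v, σ (σ v) = v) ∧ (∀ v, σ v ≠ v) ∧
      ∀ p : S × S, ((univ.filter (fun v => (f v, f (σ v)) = p)).card : ℚ)
        = (Fintype.card V : ℚ) * ν p} := by
  have hπ' : ∀ v, g (π⁻¹ v) = f v := fun v =>
    (hπ (π⁻¹ v)).symm.trans (congrArg f (π.apply_symm_apply v))
  apply Fintype.card_congr
  refine Equiv.subtypeEquiv (MulAut.conj π).toEquiv ?_
  intro σ
  constructor
  · intro h
    exact conj_aux f g ν π hπ σ h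
  · intro h
    have := conj_aux g f ν π⁻¹ hπ' _ h
    have hgrp : π⁻¹ * ((MulAut.conj π).toEquiv σ) * π⁻¹⁻¹ = σ := by
      show π⁻¹ * (π * σ * π⁻¹) * π⁻¹⁻¹ = σ
      group
    rwa [hgrp] at this

/- **Statement 0** (Lemma on counting perfect matchings with prescribed colored-edge
statistics): see Lemma `entlem` in the paper. A perfect matching on `V` is modeled as a fixed-point-free involution
`σ : V ≃ V`; the directed edges of the matching are the pairs `(v, σ v)`. -/
open scoped Classical in
theorem matching_count {V S : Type} [Fintype V] [DecidableEq V] [Fintype S] [DecidableEq S]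
    (hn : Even (Fintype.card V)) (f : V → S) (ν : S × S → ℚ)
    (hne : Nonempty {σ : Equiv.Perm V // (∀ v, σ (σ v) = v) ∧ (∀ v, σ v ≠ v) ∧
      ∀ p : S × S, ((Finset.univ.filter (fun v => (f v, f (σ v)) = p)).card : ℚ)
        = (Fintype.card V : ℚ) * ν p}) :
    (Fintype.card {σ : Equiv.Perm V // (∀ v, σ (σ v) = v) ∧ (∀ v, σ v ≠ v) ∧
        ∀ p : S × S, ((Finset.univ.filter (fun v => (f v, f (σ v)) = p)).card : ℚ)
          = (Fintype.card V : ℚ) * ν p})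
      * (Fintype.card {g : V → S // ∀ s : S,
          (Finset.univ.filter (fun v => g v = s)).card
            = (Finset.univ.filter (fun v => f v = s)).card})
    = (Fintype.card {σ : Equiv.Perm V // (∀ v, σ (σ v) = v) ∧ ∀ v, σ v ≠ v})
      * (Fintype.card {e : Fin (Fintype.card V / 2) → S × S // ∀ p : S × S,
          (((Finset.univ.filter (fun j => e j = p)).card
            + (Finset.univ.filter (fun j => e j = Prod.swap p)).card : ℕ) : ℚ)
          = (Fintype.card V : ℚ) * ν p}) := by
  obtain ⟨σ0, hσ0⟩ := hne
  -- the two-variable counting set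
  have hP1 : Fintype.card {x : Equiv.Perm V × (V → S) //
        (∀ v, x.1 (x.1 v) = v) ∧ (∀ v, x.1 v ≠ v) ∧
        ∀ p : S × S, ((univ.filter (fun v => (x.2 v, x.2 (x.1 v)) = p)).card : ℚ)
          = (Fintype.card V : ℚ) * ν p}
      = ∑ σ : Equiv.Perm V, Fintype.card {g : V → S //
        (∀ v, σ (σ v) = v) ∧ (∀ v, σ v ≠ v) ∧
        ∀ p : S × S, ((univ.filter (fun v => (g v, g (σ v)) = p)).card : ℚ)
          = (Fintype.card V : ℚ) * ν p} := by
    rw [Fintype.card_congr (Equiv.subtypeProdEquivSigmaSubtype (fun (σ : Equiv.Perm V)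
      (g : V → S) => (∀ v, σ (σ v) = v) ∧ (∀ v, σ v ≠ v) ∧
        ∀ p : S × S, ((univ.filter (fun v => (g v, g (σ v)) = p)).card : ℚ)
          = (Fintype.card V : ℚ) * ν p))]
    exact Fintype.card_sigma
  have hP2 : Fintype.card {x : Equiv.Perm V × (V → S) //
        (∀ v, x.1 (x.1 v) = v) ∧ (∀ v, x.1 v ≠ v) ∧
        ∀ p : S × S, ((univ.filter (fun v => (x.2 v, x.2 (x.1 v)) = p)).card : ℚ)
          = (Fintype.card V : ℚ) * ν p}
      = ∑ g : V → S, Fintype.card {σ : Equiv.Perm V //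
        (∀ v, σ (σ v) = v) ∧ (∀ v, σ v ≠ v) ∧
        ∀ p : S × S, ((univ.filter (fun v => (g v, g (σ v)) = p)).card : ℚ)
          = (Fintype.card V : ℚ) * ν p} := by
    have hswap : Fintype.card {x : Equiv.Perm V × (V → S) //
          (∀ v, x.1 (x.1 v) = v) ∧ (∀ v, x.1 v ≠ v) ∧
          ∀ p : S × S, ((univ.filter (fun v => (x.2 v, x.2 (x.1 v)) = p)).card : ℚ)
            = (Fintype.card V : ℚ) * ν p}
        = Fintype.card {y : (V → S) × Equiv.Perm V //
          (∀ v, y.2 (y.2 v) = v) ∧ (∀ v, y.2 v ≠ v) ∧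
          ∀ p : S × S, ((univ.filter (fun v => (y.1 v, y.1 (y.2 v)) = p)).card : ℚ)
            = (Fintype.card V : ℚ) * ν p} :=
      Fintype.card_congr (Equiv.subtypeEquiv (Equiv.prodComm (Equiv.Perm V) (V → S))
        (fun x => Iff.rfl))
    rw [hswap]
    rw [Fintype.card_congr (Equiv.subtypeProdEquivSigmaSubtype (fun (g : V → S)
      (σ : Equiv.Perm V) => (∀ v, σ (σ v) = v) ∧ (∀ v, σ v ≠ v) ∧
        ∀ p : S × S, ((univ.filter (fun v => (g v, g (σ v)) = p)).card : ℚ)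
          = (Fintype.card V : ℚ) * ν p))]
    exact Fintype.card_sigma
  -- per-σ fibers
  have hEq1 : ∀ σ : Equiv.Perm V, Fintype.card {g : V → S //
        (∀ v, σ (σ v) = v) ∧ (∀ v, σ v ≠ v) ∧
        ∀ p : S × S, ((univ.filter (fun v => (g v, g (σ v)) = p)).card : ℚ)
          = (Fintype.card V : ℚ) * ν p}
      = if (∀ v, σ (σ v) = v) ∧ (∀ v, σ v ≠ v) then
          (Fintype.card {e : Fin (Fintype.card V / 2) → S × S // ∀ p : S × S,
          (((Finset.univ.filter (fun j => e j = p)).card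
            + (Finset.univ.filter (fun j => e j = Prod.swap p)).card : ℕ) : ℚ)
          = (Fintype.card V : ℚ) * ν p}) else 0 := by
    intro σ
    by_cases h : (∀ v, σ (σ v) = v) ∧ (∀ v, σ v ≠ v)
    · rw [if_pos h]
      rw [Fintype.card_congr (Equiv.subtypeEquivRight (fun g =>
        ⟨fun hh => hh.2.2, fun hh => ⟨h.1, h.2, hh⟩⟩))]
      exact fiber_card σ h.1 h.2 ν
    · rw [if_neg h]
      rw [Fintype.card_eq_zero_iff]
      exact ⟨fun x => h ⟨x.2.1, x.2.2.1⟩⟩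
  -- per-g fibers
  have hEq2 : ∀ g : V → S, Fintype.card {σ : Equiv.Perm V //
        (∀ v, σ (σ v) = v) ∧ (∀ v, σ v ≠ v) ∧
        ∀ p : S × S, ((univ.filter (fun v => (g v, g (σ v)) = p)).card : ℚ)
          = (Fintype.card V : ℚ) * ν p}
      = if (∀ s : S, (univ.filter (fun v => g v = s)).card
            = (univ.filter (fun v => f v = s)).card) then
          (Fintype.card {σ : Equiv.Perm V // (∀ v, σ (σ v) = v) ∧ (∀ v, σ v ≠ v) ∧
            ∀ p : S × S, ((univ.filter (fun v => (f v, f (σ v)) = p)).card : ℚ)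
              = (Fintype.card V : ℚ) * ν p}) else 0 := by
    intro g
    by_cases h : ∀ s : S, (univ.filter (fun v => g v = s)).card
        = (univ.filter (fun v => f v = s)).card
    · rw [if_pos h]
      obtain ⟨π, hπ⟩ := exists_perm f g h
      exact conj_card f g ν π hπ
    · rw [if_neg h]
      rw [Fintype.card_eq_zero_iff]
      refine ⟨fun x => h fun s => ?_⟩
      have q1 := marginal (fun v => x.1 v) g ν x.2.2.2 s
      have q2 := marginal (fun v => σ0 v) f ν hσ0.2.2 s
      exact Nat.cast_inj.mp (q1.trans q2.symm)
  -- combine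
  have hside1 : (∑ σ : Equiv.Perm V, Fintype.card {g : V → S //
        (∀ v, σ (σ v) = v) ∧ (∀ v, σ v ≠ v) ∧
        ∀ p : S × S, ((univ.filter (fun v => (g v, g (σ v)) = p)).card : ℚ)
          = (Fintype.card V : ℚ) * ν p})
      = (Fintype.card {σ : Equiv.Perm V // (∀ v, σ (σ v) = v) ∧ ∀ v, σ v ≠ v})
        * (Fintype.card {e : Fin (Fintype.card V / 2) → S × S // ∀ p : S × S,
          (((Finset.univ.filter (fun j => e j = p)).card
            + (Finset.univ.filter (fun j => e j = Prod.swap p)).card : ℕ) : ℚ)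
          = (Fintype.card V : ℚ) * ν p}) := by
    rw [Finset.sum_congr rfl (fun σ _ => hEq1 σ), ← Finset.sum_filter,
      Finset.sum_const, smul_eq_mul, ← Fintype.card_subtype]
  have hside2 : (∑ g : V → S, Fintype.card {σ : Equiv.Perm V //
        (∀ v, σ (σ v) = v) ∧ (∀ v, σ v ≠ v) ∧
        ∀ p : S × S, ((univ.filter (fun v => (g v, g (σ v)) = p)).card : ℚ)
          = (Fintype.card V : ℚ) * ν p})
      = (Fintype.card {g : V → S // ∀ s : S,
          (Finset.univ.filter (fun v => g v = s)).card
            = (Finset.univ.filter (fun v => f v = s)).card})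
        * (Fintype.card {σ : Equiv.Perm V // (∀ v, σ (σ v) = v) ∧ (∀ v, σ v ≠ v) ∧
            ∀ p : S × S, ((univ.filter (fun v => (f v, f (σ v)) = p)).card : ℚ)
              = (Fintype.card V : ℚ) * ν p}) := by
    rw [Finset.sum_congr rfl (fun g _ => hEq2 g), ← Finset.sum_filter,
      Finset.sum_const, smul_eq_mul, ← Fintype.card_subtype]
  rw [mul_comm]
  rw [← hside2, ← hP2, hP1, hside1]
end

section
/- Let P and Q be probability distributions on a finite set S. Then the relative entropy satisfies D(P‖Q) ≥ 2·d_TV(P,Q)² (Pinsker's inequality), where d_TV(P,Q) = (1/2)∑_{s}|P(s)-Q(s)|. -/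
open Finset

noncomputable def hfun (x : ℝ) : ℝ := (x + 1) * Real.log x - 2 * (x - 1)

lemma hfun_hasDeriv {x : ℝ} (hx : 0 < x) :
    HasDerivAt hfun (Real.log x + x⁻¹ - 1) x := by
  have h1 : HasDerivAt (fun x : ℝ => (x + 1) * Real.log x)
      (1 * Real.log x + (x + 1) * x⁻¹) x :=
    (((hasDerivAt_id x).add_const 1)).mul (Real.hasDerivAt_log hx.ne')
  have h2 : HasDerivAt (fun x : ℝ => 2 * (x - 1)) 2 x := by
    simpa using ((hasDerivAt_id x).sub_const 1).const_mul 2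
  have := h1.sub h2
  refine this.congr_deriv ?_
  rw [add_mul, mul_inv_cancel₀ hx.ne']
  ring

lemma hfun_mono : MonotoneOn hfun (Set.Ioi 0) := by
  have hd : ∀ x ∈ interior (Set.Ioi (0:ℝ)), 0 ≤ deriv hfun x := by
    intro x hx
    rw [interior_Ioi] at hx
    rw [(hfun_hasDeriv hx).deriv]
    have := Real.one_sub_inv_le_log_of_pos hx
    linarith
  exact monotoneOn_of_deriv_nonneg (convex_Ioi 0)
    (fun x hx => (hfun_hasDeriv (Set.mem_Ioi.1 hx)).differentiableAt.continuousAt.continuousWithinAt)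
    (fun x hx => (hfun_hasDeriv (Set.mem_Ioi.1 (interior_subset hx))).differentiableAt.differentiableWithinAt)
    hd

lemma hfun_one : hfun 1 = 0 := by simp [hfun]

lemma hfun_nonneg {x : ℝ} (hx : 1 ≤ x) : 0 ≤ hfun x := by
  rw [← hfun_one]
  exact hfun_mono (Set.mem_Ioi.2 one_pos) (Set.mem_Ioi.2 (lt_of_lt_of_le one_pos hx)) hx

lemma hfun_nonpos {x : ℝ} (hx0 : 0 < x) (hx : x ≤ 1) : hfun x ≤ 0 := by
  rw [← hfun_one]
  exact hfun_mono (Set.mem_Ioi.2 hx0) (Set.mem_Ioi.2 one_pos) hx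

noncomputable def gfun (x : ℝ) : ℝ := 2 * (x + 2) * (x * Real.log x - x + 1) - 3 * (x - 1) ^ 2

lemma gfun_hasDeriv {x : ℝ} (hx : 0 < x) : HasDerivAt gfun (4 * hfun x) x := by
  have hlog : HasDerivAt (fun x : ℝ => x * Real.log x) (Real.log x + 1) x := by
    have := (hasDerivAt_id x).mul (Real.hasDerivAt_log hx.ne')
    refine this.congr_deriv ?_
    simp [hx.ne']
  have h1 : HasDerivAt (fun x : ℝ => 2 * (x + 2) * (x * Real.log x - x + 1))
      (2 * (x * Real.log x - x + 1) + 2 * (x + 2) * (Real.log x + 1 - 1)) x := by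
    have ha : HasDerivAt (fun x : ℝ => 2 * (x + 2)) 2 x := by
      simpa using ((hasDerivAt_id x).add_const 2).const_mul 2
    have hb : HasDerivAt (fun x : ℝ => x * Real.log x - x + 1) (Real.log x + 1 - 1) x :=
      (hlog.sub (hasDerivAt_id x)).add_const 1
    exact ha.mul hb
  have h2 : HasDerivAt (fun x : ℝ => 3 * (x - 1) ^ 2) (3 * (2 * (x - 1))) x := by
    have : HasDerivAt (fun x : ℝ => (x - 1) ^ 2) (2 * (x - 1) ^ 1 * 1) x :=
      (((hasDerivAt_id x).sub_const 1)).pow 2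
    simpa using this.const_mul 3
  have := h1.sub h2
  refine this.congr_deriv ?_
  simp only [hfun]
  ring

lemma gfun_one : gfun 1 = 0 := by simp [gfun]

lemma gfun_nonneg {x : ℝ} (hx : 0 < x) : 0 ≤ gfun x := by
  rcases le_total 1 x with h1 | h1
  · have hmono : MonotoneOn gfun (Set.Ici 1) := by
      refine monotoneOn_of_deriv_nonneg (convex_Ici 1)
        (fun y hy => (gfun_hasDeriv (lt_of_lt_of_le one_pos hy)).differentiableAt.continuousAt.continuousWithinAt)
        (fun y hy => (gfun_hasDeriv (lt_of_lt_of_le one_pos (le_of_lt (by simpa [interior_Ici] using hy)))).differentiableAt.differentiableWithinAt)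
        (fun y hy => ?_)
      have hy1 : (1:ℝ) < y := by simpa [interior_Ici] using hy
      rw [(gfun_hasDeriv (lt_trans one_pos hy1)).deriv]
      have := hfun_nonneg hy1.le
      linarith
    have := hmono (Set.self_mem_Ici) (Set.mem_Ici.2 h1) h1
    rwa [gfun_one] at this
  · have hanti : AntitoneOn gfun (Set.Ioc 0 1) := by
      refine antitoneOn_of_deriv_nonpos (convex_Ioc 0 1)
        (fun y hy => (gfun_hasDeriv hy.1).differentiableAt.continuousAt.continuousWithinAt)
        (fun y hy => (gfun_hasDeriv (by simpa [interior_Ioc] using (Set.mem_Ioo.1 (by simpa [interior_Ioc] using hy)).1)).differentiableAt.differentiableWithinAt)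
        (fun y hy => ?_)
      rw [interior_Ioc] at hy
      rw [(gfun_hasDeriv hy.1).deriv]
      have := hfun_nonpos hy.1 hy.2.le
      linarith
    have := hanti (Set.mem_Ioc.2 ⟨hx, h1⟩) (Set.mem_Ioc.2 ⟨one_pos, le_refl 1⟩) h1
    rwa [gfun_one] at this

lemma keyA {x : ℝ} (hx : 0 ≤ x) :
    3 * (x - 1) ^ 2 ≤ 2 * (x + 2) * (x * Real.log x - x + 1) := by
  rcases hx.eq_or_lt with h | h
  · rw [← h]
    norm_num
  · have := gfun_nonneg h
    simp only [gfun] at this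
    linarith

lemma keyB (p q : ℝ) (hp : 0 ≤ p) (hq : 0 ≤ q) (h0 : q = 0 → p = 0) :
    3 * (p - q) ^ 2 ≤ 2 * (p + 2 * q) * (p * Real.log (p / q) - p + q) := by
  by_cases hq0 : q = 0
  · rw [hq0, h0 hq0]; norm_num
  · have hqpos : 0 < q := hq.lt_of_ne (Ne.symm hq0)
    have hA := keyA (div_nonneg hp hqpos.le)
    have h2 : (0:ℝ) < q ^ 2 := by positivity
    have hm := mul_le_mul_of_nonneg_left hA h2.le
    have e1 : q ^ 2 * (3 * (p / q - 1) ^ 2) = 3 * (p - q) ^ 2 := by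
      field_simp
    have e2 : q ^ 2 * (2 * (p / q + 2) * (p / q * Real.log (p / q) - p / q + 1))
        = 2 * (p + 2 * q) * (p * Real.log (p / q) - p + q) := by
      field_simp
    rw [e1, e2] at hm
    exact hm

lemma keyC (p q : ℝ) (hp : 0 ≤ p) (hq : 0 ≤ q) (h0 : q = 0 → p = 0) :
    3 / 2 * ((p - q) ^ 2 / (p + 2 * q)) + p - q ≤ p * Real.log (p / q) := by
  by_cases hw : p + 2 * q = 0
  · have hq0 : q = 0 := by linarith [hp, hq]
    have hp0 : p = 0 := h0 hq0
    simp [hp0, hq0, hw]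
  · have hwpos : 0 < p + 2 * q := lt_of_le_of_ne (by linarith) (Ne.symm hw)
    have hB := keyB p q hp hq h0
    have he : 3 / 2 * ((p - q) ^ 2 / (p + 2 * q)) = 3 * (p - q) ^ 2 / (2 * (p + 2 * q)) := by
      field_simp
    have key : 3 / 2 * ((p - q) ^ 2 / (p + 2 * q)) ≤ p * Real.log (p / q) - p + q := by
      rw [he, div_le_iff₀ (by positivity)]
      linarith
    linarith

/- **Statement 4** (Pinsker's inequality on a finite set): if `P ≪ Q` then
`D(P‖Q) ≥ 2·d_TV(P,Q)²`, with `d_TV(P,Q) = (1/2)∑ₛ|P s - Q s|` and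
`D(P‖Q) = ∑ₛ P s · ln (P s / Q s)`. -/
theorem pinsker_finite {S : Type} [Fintype S]
    (P Q : S → ℝ) (hP0 : ∀ s, 0 ≤ P s) (hQ0 : ∀ s, 0 ≤ Q s)
    (hP1 : ∑ s, P s = 1) (hQ1 : ∑ s, Q s = 1)
    (habs : ∀ s, Q s = 0 → P s = 0) :
    2 * ((1 / 2) * ∑ s, |P s - Q s|) ^ 2 ≤ ∑ s, P s * Real.log (P s / Q s) := by
  set w : S → ℝ := fun s => P s + 2 * Q s with hw
  have hw0 : ∀ s, 0 ≤ w s := fun s => by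
    have := hP0 s; have := hQ0 s; simp only [hw]; linarith
  have hsumw : ∑ s, w s = 3 := by
    simp only [hw]
    rw [Finset.sum_add_distrib, ← Finset.mul_sum, hP1, hQ1]
    norm_num
  have hCS : (∑ s, |P s - Q s|) ^ 2 ≤ (∑ s, (P s - Q s) ^ 2 / w s) * ∑ s, w s := by
    refine Finset.sum_sq_le_sum_mul_sum_of_sq_eq_mul Finset.univ
      (fun s _ => div_nonneg (sq_nonneg _) (hw0 s)) (fun s _ => hw0 s) (fun s _ => ?_)
    by_cases hws : w s = 0
    · have hq0 : Q s = 0 := by have := hP0 s; have := hQ0 s; simp only [hw] at hws; linarith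
      have hp0 : P s = 0 := habs s hq0
      simp [hp0, hq0, hws]
    · rw [sq_abs, div_mul_cancel₀ _ hws]
  have hsum : ∑ s, (3 / 2 * ((P s - Q s) ^ 2 / w s) + P s - Q s)
      ≤ ∑ s, P s * Real.log (P s / Q s) :=
    Finset.sum_le_sum (fun s _ => keyC _ _ (hP0 s) (hQ0 s) (habs s))
  have hsplit : ∑ s, (3 / 2 * ((P s - Q s) ^ 2 / w s) + P s - Q s)
      = 3 / 2 * ∑ s, (P s - Q s) ^ 2 / w s := by
    simp only [sub_eq_add_neg, Finset.sum_add_distrib, ← Finset.mul_sum,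
      Finset.sum_neg_distrib, hP1, hQ1]
    ring
  rw [hsplit] at hsum
  rw [hsumw] at hCS
  have hgoal : 2 * ((1 / 2) * ∑ s, |P s - Q s|) ^ 2 = (∑ s, |P s - Q s|) ^ 2 / 2 := by
    ring
  rw [hgoal]
  linarith
end

section
/- Let S be a finite nonempty subset of ℝ with at least two elements, let λ ∈ ℝ and d ≥ 3. Then there do not exist S-valued random variables f(o), f(w_1), …, f(w_d) such that: (1) λ·f(o) = f(w_1) + ⋯ + f(w_d) holds almost surely; (2) the variables f(o), f(w_2), …, f(w_d) are independent and identically distributed; and (3) every element of S is taken by f(o) with positive probability. -/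
open Finset
open scoped Classical

/- **Statement 6** (rigidity of eigenvector processes, Lemma 4.4 in the paper): there is
no `S`-valued random vector `(f(o), f(w_1), …, f(w_d))` (joint law `μ`, coordinate `0`
being the root `o` and coordinate `i.succ` being `w_i`) with `|S| ≥ 2`, such that the
eigenvector equation `λ·f(o) = f(w_1)+⋯+f(w_d)` holds a.s., the variables
`f(o), f(w_2), …, f(w_d)` are i.i.d. with one-dimensional law `p`, and every element of
`S` has positive probability under `p`. -/
theorem eigenvector_rigid (d : ℕ) (hd : 3 ≤ d) (lam : ℝ) (S : Finset ℝ) (hS : 2 ≤ S.card)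
    (μ : (Fin (d + 1) → {x : ℝ // x ∈ S}) → ℝ)
    (hμ0 : ∀ x, 0 ≤ μ x) (hμ1 : ∑ x, μ x = 1)
    (heig : ∀ x, μ x ≠ 0 → lam * (x 0 : ℝ) = ∑ i : Fin d, (x i.succ : ℝ))
    (p : {x : ℝ // x ∈ S} → ℝ) (hp : ∀ s, 0 < p s)
    (hiid : ∀ y : Fin d → {x : ℝ // x ∈ S},
      (∑ x ∈ Finset.univ.filter
          (fun x : Fin (d + 1) → {x : ℝ // x ∈ S} =>
            ∀ i : Fin d, x (if i.val = 0 then 0 else i.succ) = y i), μ x)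
        = ∏ i, p (y i)) :
    False := by
  haveI : NeZero d := ⟨by omega⟩
  have hSne : S.Nonempty := card_pos.mp (by omega)
  set m := S.min' hSne with hm_def
  set M := S.max' hSne with hM_def
  have hmM : m < M := S.min'_lt_max'_of_card (by omega)
  have hmS : m ∈ S := S.min'_mem _
  have hMS : M ∈ S := S.max'_mem _
  -- key claim: for any a b ∈ S, lam*a - (d-1)*b ∈ S
  have key : ∀ a b : ℝ, a ∈ S → b ∈ S → lam * a - ((d : ℝ) - 1) * b ∈ S := by
    intro a b ha hb
    set y : Fin d → {x : ℝ // x ∈ S} :=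
      fun i => if i.val = 0 then ⟨a, ha⟩ else ⟨b, hb⟩ with hy
    have hpos : (0 : ℝ) < ∏ i, p (y i) := Finset.prod_pos (fun i _ => hp _)
    rw [← hiid y] at hpos
    obtain ⟨x, hxmem, hxne⟩ := Finset.exists_ne_zero_of_sum_ne_zero (ne_of_gt hpos)
    have hxcond : ∀ i : Fin d, x (if i.val = 0 then 0 else i.succ) = y i :=
      (Finset.mem_filter.mp hxmem).2
    have hx0 : (x 0 : ℝ) = a := by
      have := hxcond 0
      simp [hy] at this
      rw [this]
    have hxrest : ∀ i : Fin d, i ≠ 0 → (x i.succ : ℝ) = b := by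
      intro i hi
      have h0 : i.val ≠ 0 := fun h => hi (Fin.ext h)
      have := hxcond i
      simp [h0, hi, hy] at this
      rw [this]
    have heq := heig x hxne
    rw [hx0] at heq
    have hsum : ∑ i : Fin d, (x i.succ : ℝ)
        = (x (Fin.succ 0) : ℝ) + ∑ i ∈ Finset.univ.erase (0 : Fin d), (x i.succ : ℝ) := by
      exact (Finset.add_sum_erase Finset.univ (fun i : Fin d => (x i.succ : ℝ))
        (Finset.mem_univ (0 : Fin d))).symm
    have hsum2 : ∑ i ∈ Finset.univ.erase (0 : Fin d), (x i.succ : ℝ)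
        = ((d : ℝ) - 1) * b := by
      rw [Finset.sum_congr rfl (fun i hi => hxrest i (Finset.mem_erase.mp hi).1)]
      rw [Finset.sum_const, Finset.card_erase_of_mem (Finset.mem_univ _)]
      simp only [Finset.card_univ, Fintype.card_fin, nsmul_eq_mul]
      have : ((d - 1 : ℕ) : ℝ) = (d : ℝ) - 1 := by
        have : 1 ≤ d := by omega
        push_cast [this]; ring
      rw [this]
    have hc : lam * a - ((d : ℝ) - 1) * b = (x (Fin.succ 0) : ℝ) := by
      rw [heq, hsum, hsum2]; ring
    rw [hc]
    exact (x (Fin.succ 0)).2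
  have h1 := key M m hMS hmS
  have h2 := key M M hMS hMS
  have hd2 : (2 : ℝ) ≤ (d : ℝ) - 1 := by
    have : (3 : ℝ) ≤ (d : ℝ) := by exact_mod_cast hd
    linarith
  have hle1 : lam * M - ((d : ℝ) - 1) * m ≤ M := S.le_max' _ h1
  have hle2 : m ≤ lam * M - ((d : ℝ) - 1) * M := S.min'_le _ h2
  nlinarith [hmM, hd2]
end

section
/- Let λ ∈ ℝ and let d ≥ 3. Then for any finite S ⊂ ℝ with at least 2 elements, the Minkowski sum set {λ·s + (1-d)·t : s, t ∈ S} is not contained in S. -/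
/- **Statement 7**: for `d ≥ 3` and any `λ ∈ ℝ`, no finite set `S ⊂ ℝ` with at least two
elements satisfies the Minkowski sum containment `λ·S + (1-d)·S ⊆ S`. -/
theorem minkowski_not_subset (d : ℕ) (hd : 3 ≤ d) (lam : ℝ)
    (S : Finset ℝ) (hS : 2 ≤ S.card) :
    ¬ ∀ a ∈ S, ∀ b ∈ S, lam * a + (1 - (d : ℝ)) * b ∈ S := by
  intro h
  have hne : S.Nonempty := Finset.card_pos.mp (by omega)
  set m := S.min' hne with hm
  set M := S.max' hne with hM
  have hlt : m < M := S.min'_lt_max'_of_card (by omega)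
  have hmS : m ∈ S := S.min'_mem hne
  have hMS : M ∈ S := S.max'_mem hne
  have hc : (1 - (d : ℝ)) ≤ -2 := by
    have : (3 : ℝ) ≤ d := by exact_mod_cast hd
    linarith
  have hx : lam * m + (1 - (d : ℝ)) * m ∈ S := h m hmS m hmS
  have hy : lam * m + (1 - (d : ℝ)) * M ∈ S := h m hmS M hMS
  have h1 : lam * m + (1 - (d : ℝ)) * m ≤ M := S.le_max' _ hx
  have h2 : m ≤ lam * m + (1 - (d : ℝ)) * M := S.min'_le _ hy
  nlinarith [sub_pos.mpr hlt]
end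

section
/- Let S be a finite set, M : S × S → ℕ with ∑_q M(s,q) = d for every s, and suppose the directed graph on S with adjacency matrix M is strongly connected with diameter k. Let X = (X_0, X_1, …, X_d) be an exchangeable-in-leaves S-valued random vector such that with probability at least 1−ε the multiset {X_1,…,X_d} equals the multiset given by row M(X_0, ·). If some s_0 ∈ S has P(X_0 = s_0) ≥ a, then every s ∈ S satisfies P(X_0 = s) ≥ a/d^k − ε·(1/d + 1/d² + ⋯ + 1/d^k), provided additionally that the law of X_0 equals the law of each X_i (stationarity/invariance). -/
open Finset
open scoped Classical

/- **Statement 12** (Lemma 4.6(b) of the paper): for an exchangeable-in-leaves vector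
`X = (X_0, X_1, …, X_d)` (root at coordinate `0`, leaves at coordinates `i.succ`) whose
leaf multiset satisfies the covering constraint of `M` with probability at least `1-ε`,
with `M` having row sums `d` and strongly connected with diameter at most `k`, with the
leaves distributed as the root (stationarity): if `P(X_0 = s₀) ≥ a ≥ 0` for some `s₀`,
then `P(X_0 = s) ≥ a/d^k - ε·(1/d + ⋯ + 1/d^k)` for every `s`. -/
theorem covering_marginal_lower_bound {S : Type} [Fintype S] (d k : ℕ) (hd : 3 ≤ d)
    (M : S → S → ℕ) (hrow : ∀ s, ∑ q, M s q = d)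
    (hconn : ∀ s t : S, ∃ m ≤ k, ∃ path : Fin (m + 1) → S,
      path 0 = s ∧ path (Fin.last m) = t ∧
      ∀ i : Fin m, 1 ≤ M (path i.castSucc) (path i.succ))
    (ε a : ℝ) (hε : 0 ≤ ε) (ha0 : 0 ≤ a)
    (μ : (Fin (d + 1) → S) → ℝ) (hμ0 : ∀ x, 0 ≤ μ x) (hμ1 : ∑ x, μ x = 1)
    (hexch : ∀ (σ : Equiv.Perm (Fin d)) (x : Fin (d + 1) → S),
      μ (Fin.cons (x 0) (fun i => x (σ i).succ)) = μ x)
    (hcov : 1 - ε ≤ ∑ x ∈ Finset.univ.filter (fun x : Fin (d + 1) → S =>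
      ∀ q, (Finset.univ.filter (fun i : Fin d => x i.succ = q)).card = M (x 0) q), μ x)
    (hstat : ∀ (i : Fin d) (s : S),
      (∑ x ∈ Finset.univ.filter (fun x : Fin (d + 1) → S => x i.succ = s), μ x)
        = ∑ x ∈ Finset.univ.filter (fun x : Fin (d + 1) → S => x 0 = s), μ x)
    (s₀ : S)
    (ha : a ≤ ∑ x ∈ Finset.univ.filter (fun x : Fin (d + 1) → S => x 0 = s₀), μ x) :
    ∀ s : S,
      a / (d : ℝ) ^ k - ε * ∑ j ∈ Finset.Icc 1 k, (1 : ℝ) / (d : ℝ) ^ j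
        ≤ ∑ x ∈ Finset.univ.filter (fun x : Fin (d + 1) → S => x 0 = s), μ x := by
  intro s
  set P : S → ℝ := fun t => ∑ x ∈ Finset.univ.filter (fun x : Fin (d + 1) → S => x 0 = t), μ x
    with hP
  have hPdef : ∀ t, P t = ∑ x ∈ Finset.univ.filter
      (fun x : Fin (d + 1) → S => x 0 = t), μ x := fun t => by rw [hP]
  have hd0 : (0:ℝ) < (d:ℝ) := by
    have : 0 < d := by omega
    exact_mod_cast this
  have hP0 : ∀ t, 0 ≤ P t := fun t => by
    rw [hPdef]; exact Finset.sum_nonneg fun x _ => hμ0 x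
  -- covering event
  set C : Finset (Fin (d+1) → S) := Finset.univ.filter (fun x : Fin (d + 1) → S =>
      ∀ q, (Finset.univ.filter (fun i : Fin d => x i.succ = q)).card = M (x 0) q) with hC
  -- key step
  have key : ∀ u t : S, 1 ≤ M u t → P u - ε ≤ (d:ℝ) * P t := by
    intro u t hM
    set A : Finset (Fin (d+1) → S) := C.filter (fun x => x 0 = u) with hA
    have hsub : A ⊆ Finset.univ.filter (fun x : Fin (d + 1) → S => x 0 = u) := by
      intro x hx
      rw [hA, Finset.mem_filter] at hx
      rw [Finset.mem_filter]
      exact ⟨Finset.mem_univ x, hx.2⟩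
    have hmuA : P u - ε ≤ ∑ x ∈ A, μ x := by
      have h1 : ∑ x ∈ (Finset.univ.filter
          (fun x : Fin (d + 1) → S => x 0 = u)) \ A, μ x
          = P u - ∑ x ∈ A, μ x := by
        rw [hPdef]
        exact Finset.sum_sdiff_eq_sub hsub
      have h2 : ∑ x ∈ (Finset.univ.filter
          (fun x : Fin (d + 1) → S => x 0 = u)) \ A, μ x ≤ ∑ x ∈ Finset.univ \ C, μ x := by
        apply Finset.sum_le_sum_of_subset_of_nonneg
        · intro x hx
          rw [Finset.mem_sdiff] at hx ⊢
          refine ⟨Finset.mem_univ x, fun hc => hx.2 ?_⟩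
          rw [hA, Finset.mem_filter]
          exact ⟨hc, (Finset.mem_filter.mp hx.1).2⟩
        · exact fun x _ _ => hμ0 x
      have h3 : ∑ x ∈ Finset.univ \ C, μ x ≤ ε := by
        have h4 := Finset.sum_sdiff_eq_sub (Finset.subset_univ C) (f := μ)
        rw [hμ1] at h4
        rw [hC] at h4 ⊢
        linarith [hcov, h4]
      linarith
    have hstep : ∑ x ∈ A, μ x ≤ (d:ℝ) * P t := by
      have h4 : ∀ x ∈ A, μ x ≤ ∑ i : Fin d, (if x i.succ = t then μ x else 0) := by
        intro x hx
        rw [hA, Finset.mem_filter, hC, Finset.mem_filter] at hx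
        have hcard : ((Finset.univ.filter (fun i : Fin d => x i.succ = t)).card : ℝ)
            = (M u t : ℝ) := by
          rw [hx.1.2 t, hx.2]
        have h5 : ∑ i : Fin d, (if x i.succ = t then μ x else 0)
            = ((Finset.univ.filter (fun i : Fin d => x i.succ = t)).card : ℝ) * μ x := by
          rw [← Finset.sum_filter, Finset.sum_const, nsmul_eq_mul]
        rw [h5, hcard]
        have h6 : (1:ℝ) ≤ (M u t : ℝ) := by exact_mod_cast hM
        nlinarith [hμ0 x]
      calc ∑ x ∈ A, μ x ≤ ∑ x ∈ A, ∑ i : Fin d, (if x i.succ = t then μ x else 0) :=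
            Finset.sum_le_sum h4
        _ ≤ ∑ x : Fin (d+1) → S, ∑ i : Fin d, (if x i.succ = t then μ x else 0) := by
            apply Finset.sum_le_sum_of_subset_of_nonneg (Finset.subset_univ A)
            intro x _ _
            apply Finset.sum_nonneg
            intro i _
            split <;> simp [hμ0 x]
        _ = ∑ i : Fin d, ∑ x : Fin (d+1) → S, (if x i.succ = t then μ x else 0) :=
            Finset.sum_comm
        _ = ∑ i : Fin d, ∑ x ∈ Finset.univ.filter
              (fun x : Fin (d + 1) → S => x i.succ = t), μ x := by
            simp [Finset.sum_filter]
        _ = ∑ _i : Fin d, P t := by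
            refine Finset.sum_congr rfl fun i _ => ?_
            rw [hPdef]
            exact hstat i t
        _ = (d:ℝ) * P t := by
            simp [mul_comm]
    linarith
  -- geometric sum shift
  have sumshift : ∀ j : ℕ, ∑ i ∈ Finset.Icc 1 (j+1), ((d:ℝ)⁻¹)^i
      = (d:ℝ)⁻¹ * (1 + ∑ i ∈ Finset.Icc 1 j, ((d:ℝ)⁻¹)^i) := by
    intro j
    induction j with
    | zero => simp
    | succ n ih =>
        rw [Finset.sum_Icc_succ_top (by omega : 1 ≤ n + 1)] at ih
        rw [Finset.sum_Icc_succ_top (by omega : 1 ≤ n + 1 + 1),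
          Finset.sum_Icc_succ_top (by omega : 1 ≤ n + 1)]
        linear_combination ih
  -- path induction
  obtain ⟨m, hm, path, hp0, hpl, hedge⟩ := hconn s₀ s
  have main : ∀ j : ℕ, ∀ hj : j ≤ m,
      a / (d:ℝ)^j - ε * ∑ i ∈ Finset.Icc 1 j, ((d:ℝ)⁻¹)^i
        ≤ P (path ⟨j, Nat.lt_succ_of_le hj⟩) := by
    intro j
    induction j with
    | zero =>
        intro hj
        have h0 : path ⟨0, Nat.lt_succ_of_le hj⟩ = s₀ := hp0
        rw [h0, hPdef]
        simp only [pow_zero, div_one, Finset.Icc_self]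
        have : Finset.Icc 1 0 = (∅ : Finset ℕ) := by
          apply Finset.Icc_eq_empty; omega
        rw [this, Finset.sum_empty, mul_zero, sub_zero]
        exact ha
    | succ n ih =>
        intro hj
        have hn : n ≤ m := by omega
        have hIH := ih hn
        have hE := hedge ⟨n, by omega⟩
        have hcs : (⟨n, by omega⟩ : Fin m).castSucc = ⟨n, Nat.lt_succ_of_le hn⟩ := rfl
        have hsc : (⟨n, by omega⟩ : Fin m).succ = ⟨n+1, Nat.lt_succ_of_le hj⟩ := rfl
        rw [hcs, hsc] at hE
        have hkey := key _ _ hE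
        rw [sumshift n]
        set c := P (path ⟨n+1, Nat.lt_succ_of_le hj⟩) with hc
        set Sn := ∑ i ∈ Finset.Icc 1 n, ((d:ℝ)⁻¹)^i with hSn
        have hchain : a / (d:ℝ)^n - ε * Sn - ε ≤ (d:ℝ) * c := by linarith
        have heq : a / (d:ℝ)^(n+1) - ε * ((d:ℝ)⁻¹ * (1 + Sn))
            = (a / (d:ℝ)^n - ε * Sn - ε) / (d:ℝ) := by
          field_simp
          ring
        rw [heq, div_le_iff₀ hd0]
        linarith
  have hlast := main m le_rfl
  have hls : path ⟨m, Nat.lt_succ_of_le le_rfl⟩ = s := hpl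
  rw [hls] at hlast
  -- compare exponent m with k
  have hSmono : ∑ i ∈ Finset.Icc 1 m, ((d:ℝ)⁻¹)^i ≤ ∑ i ∈ Finset.Icc 1 k, ((d:ℝ)⁻¹)^i := by
    apply Finset.sum_le_sum_of_subset_of_nonneg (Finset.Icc_subset_Icc_right hm)
    intro i _ _
    positivity
  have h1d : (1:ℝ) ≤ (d:ℝ) := by exact_mod_cast (by omega : 1 ≤ d)
  have hdiv : a / (d:ℝ)^k ≤ a / (d:ℝ)^m := by gcongr
  have hrw : ∑ j ∈ Finset.Icc 1 k, (1:ℝ) / (d:ℝ)^j = ∑ i ∈ Finset.Icc 1 k, ((d:ℝ)⁻¹)^i := by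
    simp [one_div, inv_pow]
  rw [hrw]
  have hps : ∑ x ∈ Finset.univ.filter
      (fun x : Fin (d + 1) → S => x 0 = s), μ x = P s := (hPdef s).symm
  rw [hps]
  have hmul : ε * ∑ i ∈ Finset.Icc 1 m, ((d:ℝ)⁻¹)^i
      ≤ ε * ∑ i ∈ Finset.Icc 1 k, ((d:ℝ)⁻¹)^i :=
    mul_le_mul_of_nonneg_left hSmono hε
  linarith
end
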